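/- Let T > 0, let α₁, α₂ ∈ (0,2] with α* := max{α₁,α₂} > 1, and let m ≥ 1 be an integer. Then ∫_{D^m_T} ∫_{ℝ^m} exp(-∑_{j=1}^m (|v_j|^{α₁} + |v_j|^{α₂}) s_j) dv_1 ⋯ dv_m ds_1 ⋯ ds_m ≤ ( T^{m(1 − 1/α*)} / Γ(m(1 − 1/α*) + 1) ) · ( Γ(1 − 1/α*) ∫_ℝ e^{-|v|^{α*}} dv )^m; in particular this iterated integral is finite. -/

import Mathlib

/-!
Since `|v|^α ≤ |v|^α₁ + |v|^α₂` for `α = max α₁ α₂`, the inner integral is at most a product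
of one-dimensional integrals `∫ exp(-s|v|^α) dv = s^(-1/α) ∫ exp(-|v|^α) dv`. What remains is the
Dirichlet integral `∫_{D^m_T} ∏ sⱼ^(a-1) ds` with `a = 1 - 1/α > 0`; slicing off the first
coordinate turns it into a Beta integral, and induction on `m` gives `T^(ma) Γ(a)^m / Γ(ma + 1)`.
-/

open MeasureTheory

/-- The open simplex `D^m_T = {s ∈ ℝ^m : sⱼ > 0 for all j, s₁ + ⋯ + s_m < T}`. -/
def simplexD (m : ℕ) (T : ℝ) : Set (Fin m → ℝ) :=
  {s | (∀ j, 0 < s j) ∧ ∑ j, s j < T}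

open Set ENNReal

section Simplex

variable {m : ℕ} {T : ℝ}

lemma pos_of_mem_simplexD {s : Fin m → ℝ} (hs : s ∈ simplexD m T) : 0 < T :=
  (Finset.sum_nonneg fun j _ => (hs.1 j).le).trans_lt hs.2

lemma measurableSet_simplexD (m : ℕ) (T : ℝ) : MeasurableSet (simplexD m T) := by
  have h : simplexD m T = (⋂ j, {s : Fin m → ℝ | 0 < s j}) ∩ {s | ∑ j, s j < T} := by
    ext s; simp [simplexD]
  rw [h]
  exact (MeasurableSet.iInter fun j => measurableSet_lt measurable_const (measurable_pi_apply j))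
    |>.inter (measurableSet_lt (by fun_prop) measurable_const)

lemma cons_mem_simplexD_iff {x : ℝ} {y : Fin m → ℝ} :
    (Fin.cons x y : Fin (m + 1) → ℝ) ∈ simplexD (m + 1) T ↔
      x ∈ Ioo 0 T ∧ y ∈ simplexD m (T - x) := by
  simp only [simplexD, mem_ofPred_eq, Fin.forall_fin_succ, Fin.cons_zero, Fin.cons_succ,
    Fin.sum_univ_succ, mem_Ioo]
  constructor
  · rintro ⟨⟨hx, hy⟩, hsum⟩
    have hy' : y ∈ simplexD m (T - x) := ⟨hy, by linarith⟩
    exact ⟨⟨hx, sub_pos.1 (pos_of_mem_simplexD hy')⟩, hy'⟩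
  · rintro ⟨⟨hx, -⟩, hy, hsum⟩
    exact ⟨⟨hx, hy⟩, by linarith⟩

lemma setLIntegral_simplexD_succ {F : (Fin (m + 1) → ℝ) → ℝ≥0∞} (hF : Measurable F) :
    ∫⁻ s in simplexD (m + 1) T, F s =
      ∫⁻ x in Ioo 0 T, ∫⁻ y in simplexD m (T - x), F (Fin.cons x y) := by
  have hslice : ∀ x y, (simplexD (m + 1) T).indicator F (Fin.cons x y) =
      (Ioo 0 T).indicator
        (fun x => (simplexD m (T - x)).indicator (fun y => F (Fin.cons x y)) y) x := by
    intro x y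
    by_cases hx : x ∈ Ioo 0 T <;> by_cases hy : y ∈ simplexD m (T - x) <;>
      simp [indicator, cons_mem_simplexD_iff, hx, hy]
  have hmp := (volume_preserving_piFinSuccAbove (fun _ : Fin (m + 1) => ℝ) 0).symm
  rw [← lintegral_indicator (measurableSet_simplexD _ _),
    ← hmp.lintegral_comp_emb (MeasurableEquiv.measurableEmbedding _),
    Measure.volume_eq_prod, lintegral_prod _ ?meas, ← lintegral_indicator measurableSet_Ioo]
  · refine lintegral_congr fun x => ?_
    simp only [MeasurableEquiv.piFinSuccAbove_symm_apply, Fin.insertNthEquiv_zero]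
    change ∫⁻ y, (simplexD (m + 1) T).indicator F (Fin.cons x y) = _
    simp only [hslice]
    by_cases hx : x ∈ Ioo 0 T
    · simp only [indicator_of_mem hx, lintegral_indicator (measurableSet_simplexD _ _)]
    · simp only [indicator_of_notMem hx, lintegral_zero]
  · exact ((hF.indicator (measurableSet_simplexD _ _)).comp
      (MeasurableEquiv.measurable _)).aemeasurable

end Simplex

section Beta

variable {u v T : ℝ}

lemma integral_rpow_mul_sub_rpow (hu : 0 < u) (hv : 0 < v) (hT : 0 < T) :
    ∫ x in (0 : ℝ)..T, x ^ (u - 1) * (T - x) ^ (v - 1) =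
      T ^ (u + v - 1) * (Real.Gamma u * Real.Gamma v / Real.Gamma (u + v)) := by
  have hGamma : ∀ w : ℝ, Complex.Gamma w = Real.Gamma w := Complex.Gamma_ofReal
  have hbeta : Complex.betaIntegral u v = Real.Gamma u * Real.Gamma v / Real.Gamma (u + v) := by
    have hne : (Real.Gamma (u + v) : ℂ) ≠ 0 := by
      exact_mod_cast (Real.Gamma_pos_of_pos (by linarith)).ne'
    rw [eq_div_iff hne, ← hGamma, ← hGamma, Complex.ofReal_add, ← hGamma,
      Complex.Gamma_mul_Gamma_eq_betaIntegral (by simpa using hu) (by simpa using hv), mul_comm]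
  apply Complex.ofReal_injective
  rw [← intervalIntegral.integral_ofReal]
  calc ∫ x in (0 : ℝ)..T, ((x ^ (u - 1) * (T - x) ^ (v - 1) : ℝ) : ℂ)
      = ∫ x in (0 : ℝ)..T, (x : ℂ) ^ ((u : ℂ) - 1) * ((T : ℂ) - x) ^ ((v : ℂ) - 1) := by
        refine intervalIntegral.integral_congr fun x hx => ?_
        rw [uIcc_of_le hT.le] at hx
        push_cast [Complex.ofReal_cpow hx.1, Complex.ofReal_cpow (sub_nonneg.2 hx.2)]
        rfl
    _ = _ := by
        rw [Complex.betaIntegral_scaled u v hT, hbeta]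
        push_cast [Complex.ofReal_cpow hT.le]
        rfl

lemma integrableOn_rpow_mul_sub_rpow (hu : 0 < u) (hv : 1 ≤ v) (hT : 0 < T) :
    IntegrableOn (fun x : ℝ => x ^ (u - 1) * (T - x) ^ (v - 1)) (Ioo 0 T) := by
  have h := (intervalIntegral.intervalIntegrable_rpow' (r := u - 1) (a := 0) (b := T)
    (by linarith)).mul_continuousOn (f := fun x => x ^ (u - 1)) (g := fun x => (T - x) ^ (v - 1))
      ((continuous_const.sub continuous_id).continuousOn.rpow_const fun _ _ => Or.inr (by linarith))
  rw [intervalIntegrable_iff_integrableOn_Ioc_of_le hT.le] at h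
  exact h.mono_set Ioo_subset_Ioc_self

lemma setLIntegral_Ioo_rpow_mul_sub_rpow (hu : 0 < u) (hv : 1 ≤ v) (hT : 0 < T) :
    ∫⁻ x in Ioo 0 T, ENNReal.ofReal (x ^ (u - 1)) * ENNReal.ofReal ((T - x) ^ (v - 1)) =
      ENNReal.ofReal (T ^ (u + v - 1) * (Real.Gamma u * Real.Gamma v / Real.Gamma (u + v))) := by
  have hnonneg : ∀ x ∈ Ioo 0 T, 0 ≤ x ^ (u - 1) * (T - x) ^ (v - 1) := fun x hx =>
    mul_nonneg (Real.rpow_nonneg hx.1.le _) (Real.rpow_nonneg (sub_nonneg.2 hx.2.le) _)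
  rw [← integral_rpow_mul_sub_rpow hu (by linarith) hT, intervalIntegral.integral_of_le hT.le,
    integral_Ioc_eq_integral_Ioo, ofReal_integral_eq_lintegral_ofReal
      (integrableOn_rpow_mul_sub_rpow hu hv hT)
      ((ae_restrict_iff' measurableSet_Ioo).2 (.of_forall hnonneg))]
  exact setLIntegral_congr_fun measurableSet_Ioo fun x hx =>
    (ENNReal.ofReal_mul (Real.rpow_nonneg hx.1.le _)).symm

end Beta

theorem setLIntegral_simplexD_prod_rpow {a : ℝ} (ha : 0 < a) (m : ℕ) {T : ℝ} (hT : 0 < T) :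
    ∫⁻ s in simplexD m T, ∏ j, ENNReal.ofReal (s j ^ (a - 1)) =
      ENNReal.ofReal (T ^ ((m : ℝ) * a) * Real.Gamma a ^ m / Real.Gamma ((m : ℝ) * a + 1)) := by
  induction m generalizing T with
  | zero =>
    have huniv : simplexD 0 T = univ := by ext s; simp [simplexD, hT]
    simp [huniv, Real.Gamma_one, volume_pi]
  | succ m ih =>
    have hΓma := Real.Gamma_pos_of_pos (by positivity : 0 < (m : ℝ) * a + 1)
    set K := Real.Gamma a ^ m / Real.Gamma ((m : ℝ) * a + 1) with hK
    have hfiber : ∀ x ∈ Ioo 0 T,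
        ∫⁻ y in simplexD m (T - x),
            ∏ j, ENNReal.ofReal ((Fin.cons x y : Fin (m + 1) → ℝ) j ^ (a - 1)) =
          ENNReal.ofReal (x ^ (a - 1)) * ENNReal.ofReal ((T - x) ^ (((m : ℝ) * a + 1) - 1)) *
            ENNReal.ofReal K := by
      intro x hx
      simp only [Fin.prod_univ_succ, Fin.cons_zero, Fin.cons_succ]
      rw [lintegral_const_mul _ (by fun_prop), ih (sub_pos.2 hx.2), mul_div_assoc,
        ENNReal.ofReal_mul (Real.rpow_nonneg (sub_nonneg.2 hx.2.le) _), add_sub_cancel_right,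
        mul_assoc]
    rw [setLIntegral_simplexD_succ (by fun_prop), setLIntegral_congr_fun measurableSet_Ioo hfiber,
      lintegral_mul_const _ (by fun_prop),
      setLIntegral_Ioo_rpow_mul_sub_rpow ha (le_add_of_nonneg_left (by positivity)) hT,
      ← ENNReal.ofReal_mul (by positivity), hK]
    congr 1
    rw [show a + ((m : ℝ) * a + 1) - 1 = ((m + 1 : ℕ) : ℝ) * a by push_cast; ring,
      show a + ((m : ℝ) * a + 1) = ((m + 1 : ℕ) : ℝ) * a + 1 by push_cast; ring]
    field_simp
    ring

section StretchedExponential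

variable {p : ℝ}

lemma integrable_exp_neg_abs_rpow (hp : 0 < p) :
    Integrable fun x : ℝ => Real.exp (-|x| ^ p) := by
  have hIoi : IntegrableOn (fun x : ℝ => Real.exp (-|x| ^ p)) (Ioi 0) := by
    refine IntegrableOn.congr_fun (f := fun x : ℝ => Real.exp (-x ^ p)) ?_
      (fun x (hx : 0 < x) => by rw [abs_of_pos hx]) measurableSet_Ioi
    simpa using integrableOn_rpow_mul_exp_neg_rpow (s := 0) (by norm_num) hp
  have hIic : IntegrableOn (fun x : ℝ => Real.exp (-|x| ^ p)) (Iic 0) := by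
    have hneg : MeasurableEmbedding fun x : ℝ => -x := (Homeomorph.neg ℝ).measurableEmbedding
    rw [← Measure.map_neg_eq_self (volume : Measure ℝ), hneg.integrableOn_map_iff]
    simpa [Function.comp_def] using (integrableOn_Ici_iff_integrableOn_Ioi).2 hIoi
  rw [← integrableOn_univ, ← Iic_union_Ioi (a := (0 : ℝ))]
  exact hIic.union hIoi

lemma exp_neg_abs_rpow_rpow_inv_mul {s : ℝ} (hp : 0 < p) (hs : 0 < s) (x : ℝ) :
    Real.exp (-|s ^ p⁻¹ * x| ^ p) = Real.exp (-(s * |x| ^ p)) := by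
  have hc : 0 < s ^ p⁻¹ := Real.rpow_pos_of_pos hs _
  rw [abs_mul, abs_of_pos hc, Real.mul_rpow hc.le (abs_nonneg x), Real.rpow_inv_rpow hs.le hp.ne']

lemma integrable_exp_neg_mul_abs_rpow {s : ℝ} (hp : 0 < p) (hs : 0 < s) :
    Integrable fun x : ℝ => Real.exp (-(s * |x| ^ p)) := by
  simpa only [exp_neg_abs_rpow_rpow_inv_mul hp hs] using
    (integrable_exp_neg_abs_rpow hp).comp_mul_left' (Real.rpow_pos_of_pos hs p⁻¹).ne'

lemma integral_exp_neg_mul_abs_rpow {s : ℝ} (hp : 0 < p) (hs : 0 < s) :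
    ∫ x : ℝ, Real.exp (-(s * |x| ^ p)) = s ^ (-p⁻¹) * ∫ x : ℝ, Real.exp (-|x| ^ p) := by
  have h := Measure.integral_comp_mul_left (fun x : ℝ => Real.exp (-|x| ^ p)) (s ^ p⁻¹)
  simp only [exp_neg_abs_rpow_rpow_inv_mul hp hs] at h
  rw [h, smul_eq_mul, abs_of_pos (inv_pos.2 (Real.rpow_pos_of_pos hs _)), Real.rpow_neg hs.le]

lemma lintegral_exp_neg_sum_mul_abs_rpow {ι : Type*} [Fintype ι] (hp : 0 < p) {s : ι → ℝ}
    (hs : ∀ j, 0 < s j) :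
    ∫⁻ v : ι → ℝ, ENNReal.ofReal (Real.exp (-∑ j, s j * |v j| ^ p)) =
      ∏ j, ENNReal.ofReal (s j ^ (-p⁻¹) * ∫ x : ℝ, Real.exp (-|x| ^ p)) := by
  simp only [← Finset.sum_neg_distrib, Real.exp_sum]
  rw [volume_pi, ← ofReal_integral_eq_lintegral_ofReal
      (Integrable.fintype_prod fun j => integrable_exp_neg_mul_abs_rpow hp (hs j))
      (.of_forall fun v => Finset.prod_nonneg fun j _ => (Real.exp_pos _).le),
    integral_fintype_prod_eq_prod (fun j x => Real.exp (-(s j * |x| ^ p))),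
    ENNReal.ofReal_prod_of_nonneg fun j _ => integral_nonneg fun x => (Real.exp_pos _).le]
  simp only [integral_exp_neg_mul_abs_rpow hp (hs _)]

end StretchedExponential

lemma rpow_max_le_rpow_add_rpow {x : ℝ} (hx : 0 ≤ x) (a b : ℝ) :
    x ^ max a b ≤ x ^ a + x ^ b := by
  rcases max_choice a b with h | h <;> rw [h]
  · exact le_add_of_nonneg_right (Real.rpow_nonneg hx b)
  · exact le_add_of_nonneg_left (Real.rpow_nonneg hx a)

theorem stmt_15_general (T α₁ α₂ : ℝ) (hT : 0 < T)
    (hmax : 1 < max α₁ α₂)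
    (m : ℕ) :
    (∫⁻ s in simplexD m T, ∫⁻ v : Fin m → ℝ,
        ENNReal.ofReal (Real.exp (-∑ j, (|v j| ^ α₁ + |v j| ^ α₂) * s j))) ≤
      ENNReal.ofReal
        (T ^ ((m : ℝ) * (1 - 1 / max α₁ α₂)) /
            Real.Gamma ((m : ℝ) * (1 - 1 / max α₁ α₂) + 1) *
          (Real.Gamma (1 - 1 / max α₁ α₂) * ∫ v : ℝ, Real.exp (-|v| ^ max α₁ α₂)) ^ m) := by
  set α := max α₁ α₂
  set a := 1 - 1 / α with ha_def
  have ha : 0 < a := by rw [ha_def, sub_pos, div_lt_one (by linarith)]; exact hmax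
  have hexponent : -α⁻¹ = a - 1 := by rw [ha_def, one_div]; ring
  set I := ∫ v : ℝ, Real.exp (-|v| ^ α)
  have hI : 0 ≤ I := integral_nonneg fun _ => (Real.exp_pos _).le
  have hD := measurableSet_simplexD m T
  calc _ ≤ ∫⁻ s in simplexD m T, ∫⁻ v : Fin m → ℝ,
          ENNReal.ofReal (Real.exp (-∑ j, s j * |v j| ^ α)) := by
        refine setLIntegral_mono' hD fun s hs => lintegral_mono fun v => ?_
        refine ENNReal.ofReal_le_ofReal (Real.exp_le_exp.2 (neg_le_neg
          (Finset.sum_le_sum fun j _ => ?_)))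
        rw [mul_comm]
        exact mul_le_mul_of_nonneg_right (rpow_max_le_rpow_add_rpow (abs_nonneg _) _ _)
          (hs.1 j).le
    _ = ∫⁻ s in simplexD m T, (∏ j, ENNReal.ofReal (s j ^ (a - 1))) * ENNReal.ofReal I ^ m := by
        refine setLIntegral_congr_fun hD fun s hs => ?_
        rw [lintegral_exp_neg_sum_mul_abs_rpow (by linarith : (0 : ℝ) < α) hs.1]
        simp only [hexponent, ENNReal.ofReal_mul (Real.rpow_nonneg (hs.1 _).le _),
          Finset.prod_mul_distrib, Finset.prod_const, Finset.card_univ, Fintype.card_fin]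
        rfl
    _ = ENNReal.ofReal (T ^ ((m : ℝ) * a) * Real.Gamma a ^ m / Real.Gamma ((m : ℝ) * a + 1)) *
          ENNReal.ofReal I ^ m := by
        rw [lintegral_mul_const _ (by fun_prop), setLIntegral_simplexD_prod_rpow ha m hT]
    _ = _ := by
        rw [← ENNReal.ofReal_pow hI, ← ENNReal.ofReal_mul (by positivity)]
        congr 1
        ring

/-- The iterated integral of the (nonnegative) integrand is bounded by the stated constant;
in particular (since the right-hand side is a finite real number) it is finite. -/
theorem stmt_15 (T α₁ α₂ : ℝ) (hT : 0 < T)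
    (h1 : α₁ ∈ Set.Ioc (0 : ℝ) 2) (h2 : α₂ ∈ Set.Ioc (0 : ℝ) 2) (hmax : 1 < max α₁ α₂)
    (m : ℕ) (hm : 1 ≤ m) :
    (∫⁻ s in simplexD m T, ∫⁻ v : Fin m → ℝ,
        ENNReal.ofReal (Real.exp (-∑ j, (|v j| ^ α₁ + |v j| ^ α₂) * s j))) ≤
      ENNReal.ofReal
        (T ^ ((m : ℝ) * (1 - 1 / max α₁ α₂)) /
            Real.Gamma ((m : ℝ) * (1 - 1 / max α₁ α₂) + 1) *
          (Real.Gamma (1 - 1 / max α₁ α₂) * ∫ v : ℝ, Real.exp (-|v| ^ max α₁ α₂)) ^ m) :=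
  stmt_15_general T α₁ α₂ hT hmax m
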